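/- For the one-way random effects decomposition, if the within-group sample sizes are n_1,...,n_a with Σ n_i = n and all n_i equal (balanced design), then the matrix G = K^T Z Z^T K has exactly two distinct eigenvalues, whereas for an unbalanced design with distinct group sizes the number of distinct eigenvalues L can exceed 2; specifically, the nonzero eigenvalues of Z^T (I - X(X^TX)^{-1}X^T) Z determine L. -/

import Mathlib

/-!
Write `B = Kᵀ Z`, so that `G = B Bᵀ`. Since `K Kᵀ` is the centering projection,
`Bᵀ B = Zᵀ Z - n⁻¹ Zᵀ J Z`, which in a balanced design with group size `m` is
`m I - (m²/n) J`; as `B J = Kᵀ J = 0`, this gives `G² = m G`. Hence the spectrum of `G` lies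
in `{0, m}`; `m` is attained because `G ≠ 0` (its trace is `m (a - 1)`), and `0` because `G`
has rank at most `a < n - 1`. The nonzero spectra of `B Bᵀ` and `Bᵀ B` agree, and
`Bᵀ B = Zᵀ (I - X (XᵀX)⁻¹ Xᵀ) Z`.
-/

open Matrix Finset

local notation "𝕁" => Matrix.of fun _ _ => (1 : ℝ)

namespace spectrum

open Polynomial

variable {R A : Type*} [Field R] [Ring A] [Algebra R A]

theorem subset_pair_of_mul_self_eq_smul {a : A} {c : R} (h : a * a = c • a) :
    spectrum R a ⊆ {0, c} := by
  intro μ hμ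
  have hroot : eval μ (X ^ 2 - C c * X) ∈ spectrum R (aeval a (X ^ 2 - C c * X)) :=
    subset_polynomial_aeval a _ ⟨μ, hμ, rfl⟩
  have haeval : aeval a (X ^ 2 - C c * X) = 0 := by simp [sq, h, Algebra.smul_def]
  have heval : eval μ (X ^ 2 - C c * X) = μ * (μ - c) := by
    simp only [eval_sub, eval_pow, eval_mul, eval_C, eval_X]
    ring
  rw [haeval, heval, mem_iff, sub_zero] at hroot
  have hμc : μ * (μ - c) = 0 :=
    not_ne_iff.mp fun hne => hroot ((isUnit_iff_ne_zero.mpr hne).map _)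
  simpa [sub_eq_zero] using hμc

theorem mem_of_mul_self_eq_smul {a : A} {c : R} (h : a * a = c • a) (ha : a ≠ 0) :
    c ∈ spectrum R a := by
  intro hunit
  apply ha
  refine hunit.mul_right_eq_zero.mp ?_
  rw [sub_mul, h, Algebra.algebraMap_eq_smul_one, smul_one_mul, sub_self]

end spectrum

namespace Matrix

variable {m n K : Type*} [Fintype m] [Fintype n] [DecidableEq m] [Field K]

theorem spectrum_mul_comm_diff_zero [DecidableEq n] (A : Matrix m n K) (B : Matrix n m K) :
    spectrum K (A * B) \ {0} = spectrum K (B * A) \ {0} := by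
  ext μ
  simp only [Set.mem_sdiff, Set.mem_singleton_iff, mem_spectrum_iff_isRoot_charpoly,
    Polynomial.IsRoot.def]
  refine and_congr_left fun hμ => ?_
  have h := congrArg (Polynomial.eval μ) (charpoly_mul_comm' A B)
  simp only [Polynomial.eval_mul, Polynomial.eval_pow, Polynomial.eval_X] at h
  constructor <;> intro h0 <;> simpa [h0, hμ] using h

theorem zero_mem_spectrum_mul_of_card_lt (A : Matrix m n K) (B : Matrix n m K)
    (h : Fintype.card n < Fintype.card m) : 0 ∈ spectrum K (A * B) := by
  rw [spectrum.zero_mem_iff]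
  intro hunit
  have := (rank_of_isUnit _ hunit).symm.trans_le
    ((rank_mul_le_left A B).trans A.rank_le_card_width)
  omega

theorem mem_spectrum_of_mulVec_eq_smul {A : Matrix m m K} {v : m → K} {μ : K} (hv : v ≠ 0)
    (h : A *ᵥ v = μ • v) : μ ∈ spectrum K A := by
  rw [spectrum.mem_iff, isUnit_iff_isUnit_det, isUnit_iff_ne_zero, not_not,
    ← exists_mulVec_eq_zero_iff]
  refine ⟨v, hv, ?_⟩
  rw [sub_mulVec, h, Algebra.algebraMap_eq_smul_one, smul_mulVec, one_mulVec, sub_self]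

end Matrix

def groupIndicator {ι κ : Type*} [DecidableEq κ] (grp : ι → κ) : Matrix ι κ ℝ :=
  of fun i j => if grp i = j then 1 else 0

namespace groupIndicator

variable {ι κ ρ : Type*} [DecidableEq κ] (grp : ι → κ)

theorem transpose_mul_self [Fintype ι] :
    (groupIndicator grp)ᵀ * groupIndicator grp = diagonal fun j => (#{i | grp i = j} : ℝ) := by
  ext j j'
  simp only [groupIndicator, mul_apply, transpose_apply, of_apply, diagonal_apply, mul_ite,
    mul_one, mul_zero, ← ite_and]
  rcases eq_or_ne j j' with rfl | hne
  · simp [Finset.sum_boole]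
  · rw [if_neg hne]
    refine Finset.sum_eq_zero fun i _ => if_neg ?_
    rintro ⟨h₁, h₂⟩
    exact hne (h₂.symm.trans h₁)

theorem mul_ones [Fintype κ] : groupIndicator grp * (𝕁 : Matrix κ ρ ℝ) = 𝕁 := by
  ext i k
  simp [groupIndicator, mul_apply]

theorem transpose_mul_ones [Fintype ι] :
    (groupIndicator grp)ᵀ * (𝕁 : Matrix ι ρ ℝ) =
      of fun j _ => (#{i | grp i = j} : ℝ) := by
  ext j k
  simp [groupIndicator, mul_apply, Finset.sum_boole, eq_comm]

theorem transpose_mul_ones_mul [Fintype ι] [Fintype κ] :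
    (groupIndicator grp)ᵀ * (𝕁 : Matrix ι ι ℝ) * groupIndicator grp =
      of fun j j' => (#{i | grp i = j} : ℝ) * #{i | grp i = j'} := by
  rw [transpose_mul_ones]
  ext j j'
  simp [groupIndicator, mul_apply, Finset.sum_ite, eq_comm, mul_comm]

end groupIndicator

section Centering

variable {ι r ρ : Type*} [Fintype ι] [Fintype r] [DecidableEq r]

theorem transpose_mul_ones_eq_zero_of_centering [DecidableEq ι] {K : Matrix ι r ℝ}
    (hK1 : Kᵀ * K = 1) (hK2 : K * Kᵀ = 1 - (Fintype.card ι : ℝ)⁻¹ • 𝕁) :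
    Kᵀ * (𝕁 : Matrix ι ρ ℝ) = 0 := by
  have hKJ : (Fintype.card ι : ℝ)⁻¹ • (Kᵀ * (𝕁 : Matrix ι ι ℝ)) = 0 := by
    have h := congrArg (Kᵀ * ·) hK2
    simp only [← Matrix.mul_assoc, hK1, Matrix.one_mul, Matrix.mul_sub, Matrix.mul_one,
      Matrix.mul_smul] at h
    exact sub_eq_self.mp h.symm
  rcases isEmpty_or_nonempty ι with hι | ⟨⟨i₀⟩⟩
  · ext k p
    simp [mul_apply]
  · have hKJ' := (smul_eq_zero.mp hKJ).resolve_left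
      (inv_ne_zero (Nat.cast_ne_zero.mpr (Fintype.card_pos_iff.mpr ⟨i₀⟩).ne'))
    ext k p
    simpa [mul_apply] using congrFun (congrFun hKJ' k) i₀

theorem ones_mul_inv_mul_transpose_ones (X : Matrix ι (Fin 1) ℝ) (hX : X = 𝕁) :
    X * (Xᵀ * X)⁻¹ * Xᵀ = (Fintype.card ι : ℝ)⁻¹ • 𝕁 := by
  have hXX : Xᵀ * X = of fun _ _ => (Fintype.card ι : ℝ) := by
    ext
    simp [hX, mul_apply]
  rw [hXX, Matrix.inv_def, det_fin_one, adjugate_fin_one, Ring.inverse_eq_inv', hX]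
  ext
  simp [mul_apply]

theorem spectrum_gram_diff_zero_eq_residual [DecidableEq ι] {κ : Type*} [Fintype κ]
    [DecidableEq κ] (grp : ι → κ) {K : Matrix ι r ℝ}
    (hK2 : K * Kᵀ = 1 - (Fintype.card ι : ℝ)⁻¹ • 𝕁) (X : Matrix ι (Fin 1) ℝ)
    (hX : X = 𝕁) :
    spectrum ℝ (Kᵀ * groupIndicator grp * (groupIndicator grp)ᵀ * K) \ {0} =
      spectrum ℝ
        ((groupIndicator grp)ᵀ * (1 - X * (Xᵀ * X)⁻¹ * Xᵀ) * groupIndicator grp) \ {0} := by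
  rw [ones_mul_inv_mul_transpose_ones X hX, ← hK2, Matrix.mul_assoc (Kᵀ * _),
    ← Matrix.mul_assoc _ K, Matrix.mul_assoc _ Kᵀ]
  exact spectrum_mul_comm_diff_zero (Kᵀ * groupIndicator grp) ((groupIndicator grp)ᵀ * K)

end Centering

section Balanced

variable {ι κ r : Type*} [Fintype ι] [Fintype κ] [DecidableEq κ] {grp : ι → κ} {m : ℕ}

theorem card_eq_card_mul_of_balanced (hc : ∀ j, #{i | grp i = j} = m) :
    Fintype.card ι = Fintype.card κ * m := by
  rw [← Finset.card_univ, Finset.card_eq_sum_card_fiberwise (fun i _ => mem_univ (grp i))]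
  simp [hc]

variable [Fintype r] [DecidableEq ι] {K : Matrix ι r ℝ}

theorem gram_of_balanced (hc : ∀ j, #{i | grp i = j} = m)
    (hK2 : K * Kᵀ = 1 - (Fintype.card ι : ℝ)⁻¹ • 𝕁) :
    (Kᵀ * groupIndicator grp)ᵀ * (Kᵀ * groupIndicator grp) =
      (m : ℝ) • 1 - ((m : ℝ) ^ 2 / Fintype.card ι) • 𝕁 := by
  have hZZ : (groupIndicator grp)ᵀ * groupIndicator grp = (m : ℝ) • 1 := by
    rw [groupIndicator.transpose_mul_self]
    simp [hc, smul_one_eq_diagonal]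
  have hZJZ :
      (groupIndicator grp)ᵀ * (𝕁 : Matrix ι ι ℝ) * groupIndicator grp = (m : ℝ) ^ 2 • 𝕁 := by
    rw [groupIndicator.transpose_mul_ones_mul]
    ext
    simp [hc, sq]
  rw [transpose_mul, transpose_transpose, Matrix.mul_assoc, ← Matrix.mul_assoc K, hK2,
    Matrix.sub_mul, Matrix.mul_sub, Matrix.one_mul, hZZ, Matrix.smul_mul, Matrix.mul_smul,
    ← Matrix.mul_assoc, hZJZ, smul_smul, div_eq_inv_mul]

variable [DecidableEq r]

theorem mul_self_eq_smul_of_balanced (hc : ∀ j, #{i | grp i = j} = m) (hK1 : Kᵀ * K = 1)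
    (hK2 : K * Kᵀ = 1 - (Fintype.card ι : ℝ)⁻¹ • 𝕁) :
    (Kᵀ * groupIndicator grp) * (Kᵀ * groupIndicator grp)ᵀ *
        ((Kᵀ * groupIndicator grp) * (Kᵀ * groupIndicator grp)ᵀ) =
      (m : ℝ) • ((Kᵀ * groupIndicator grp) * (Kᵀ * groupIndicator grp)ᵀ) := by
  set B := Kᵀ * groupIndicator grp
  have hBJ : B * (𝕁 : Matrix κ κ ℝ) = 0 := by
    rw [Matrix.mul_assoc, groupIndicator.mul_ones, transpose_mul_ones_eq_zero_of_centering hK1 hK2]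
  calc B * Bᵀ * (B * Bᵀ) = B * (Bᵀ * B) * Bᵀ := by simp only [Matrix.mul_assoc]
    _ = (m : ℝ) • (B * Bᵀ) := by
      rw [gram_of_balanced hc hK2, Matrix.mul_sub, Matrix.mul_smul, Matrix.mul_smul, hBJ,
        smul_zero, sub_zero, Matrix.mul_one, Matrix.smul_mul]

theorem spectrum_eq_pair_of_balanced (hc : ∀ j, #{i | grp i = j} = m) (hK1 : Kᵀ * K = 1)
    (hK2 : K * Kᵀ = 1 - (Fintype.card ι : ℝ)⁻¹ • 𝕁) (hm : m ≠ 0)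
    (hκ : 1 < Fintype.card κ) (hr : Fintype.card κ < Fintype.card r) :
    spectrum ℝ (Kᵀ * groupIndicator grp * (groupIndicator grp)ᵀ * K) = {0, (m : ℝ)} := by
  have hGG := mul_self_eq_smul_of_balanced hc hK1 hK2
  set B := Kᵀ * groupIndicator grp
  rw [show B * (groupIndicator grp)ᵀ * K = B * Bᵀ by simp [B, Matrix.mul_assoc]]
  have htrace : trace (B * Bᵀ) = m * (Fintype.card κ - 1) := by
    rw [trace_mul_comm, gram_of_balanced hc hK2, card_eq_card_mul_of_balanced hc]
    simp [trace]
    field_simp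
  refine (spectrum.subset_pair_of_mul_self_eq_smul hGG).antisymm ?_
  rintro μ (rfl | rfl)
  · exact zero_mem_spectrum_mul_of_card_lt _ _ hr
  · refine spectrum.mem_of_mul_self_eq_smul hGG fun h0 => ?_
    rw [h0, trace_zero] at htrace
    have hκ' : (1 : ℝ) < Fintype.card κ := by exact_mod_cast hκ
    exact mul_ne_zero (Nat.cast_ne_zero.mpr hm) (sub_pos.mpr hκ').ne' htrace.symm

end Balanced

/-- Group sizes `1, 1, 2`; the columns of `K` are those of a normalized `4 × 4` Hadamard matrix
orthogonal to the all-ones vector. -/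
theorem exists_one_way_design_with_three_eigenvalues :
    ∃ (n a : ℕ) (grp : Fin n → Fin a) (K : Matrix (Fin n) (Fin (n - 1)) ℝ),
      Kᵀ * K = 1 ∧ K * Kᵀ = 1 - (n : ℝ)⁻¹ • 𝕁 ∧
      2 < (spectrum ℝ (Kᵀ * groupIndicator grp * (groupIndicator grp)ᵀ * K)).ncard := by
  let K : Matrix (Fin 4) (Fin 3) ℝ :=
    !![1/2, 1/2, 1/2; -1/2, 1/2, -1/2; 1/2, -1/2, -1/2; -1/2, -1/2, 1/2]
  let grp : Fin 4 → Fin 3 := ![0, 1, 2, 2]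
  have hG : Kᵀ * groupIndicator grp * (groupIndicator grp)ᵀ * K =
      !![1/2, 0, 1/2; 0, 3/2, 0; 1/2, 0, 1/2] := by
    ext i j
    fin_cases i <;> fin_cases j <;>
      simp [K, grp, groupIndicator, mul_apply, Fin.sum_univ_succ] <;> norm_num
  have hsub : {0, 1, 3/2} ⊆ spectrum ℝ !![(1/2 : ℝ), 0, 1/2; 0, 3/2, 0; 1/2, 0, 1/2] := by
    rintro μ (rfl | rfl | rfl)
    · exact mem_spectrum_of_mulVec_eq_smul (v := ![1, 0, -1]) (by simp)
        (by ext i; fin_cases i <;> norm_num)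
    · exact mem_spectrum_of_mulVec_eq_smul (v := ![1, 0, 1]) (by simp)
        (by ext i; fin_cases i <;> norm_num)
    · exact mem_spectrum_of_mulVec_eq_smul (v := ![0, 1, 0]) (by simp)
        (by ext i; fin_cases i <;> norm_num)
  refine ⟨4, 3, grp, K, ?_, ?_, ?_⟩
  · ext i j
    fin_cases i <;> fin_cases j <;> simp [K, mul_apply, Fin.sum_univ_succ, one_apply] <;> norm_num
  · ext i j
    fin_cases i <;> fin_cases j <;> simp [K, mul_apply, Fin.sum_univ_succ, one_apply] <;> norm_num
  · calc 2 < ({0, 1, 3/2} : Set ℝ).ncard := by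
          rw [Set.ncard_insert_of_notMem (by norm_num) (by simp), Set.ncard_pair (by norm_num)]
          norm_num
      _ ≤ _ := hG ▸ Set.ncard_le_ncard hsub (finite_spectrum _)

/-- In the one-way random effects model (X = 1ₙ, A = I, Z the group-indicator matrix,
K K ᵀ = I − (1/n)Jₙ, KᵀK = I): (i) for a balanced design (all group sizes equal, each
at least 2, with at least two groups) the matrix G = Kᵀ Z Zᵀ K has exactly two distinct
eigenvalues; (ii) for unbalanced designs the number L of distinct eigenvalues can
exceed 2; (iii) in general the nonzero eigenvalues of G coincide with the nonzero
eigenvalues of Zᵀ (I − X(XᵀX)⁻¹Xᵀ) Z, which therefore determine L. -/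
theorem one_way_eigenvalue_structure :
    -- (i) balanced case: exactly two distinct eigenvalues
    (∀ (n a : ℕ) (_ : 2 ≤ a) (grp : Fin n → Fin a)
       (m : ℕ) (_ : 2 ≤ m)
       (_ : ∀ j : Fin a, (Finset.univ.filter fun i => grp i = j).card = m)
       (K : Matrix (Fin n) (Fin (n - 1)) ℝ)
       (_ : Kᵀ * K = 1)
       (_ : K * Kᵀ = 1 - ((n : ℝ))⁻¹ • (Matrix.of fun _ _ => (1:ℝ))),
       (spectrum ℝ
         (Kᵀ * (Matrix.of fun i j => if grp i = j then (1:ℝ) else 0)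
            * (Matrix.of fun i j => if grp i = j then (1:ℝ) else 0)ᵀ * K)).ncard = 2) ∧
    -- (ii) an unbalanced design can have more than two distinct eigenvalues
    (∃ (n a : ℕ) (grp : Fin n → Fin a) (K : Matrix (Fin n) (Fin (n - 1)) ℝ),
       Kᵀ * K = 1 ∧
       K * Kᵀ = 1 - ((n : ℝ))⁻¹ • (Matrix.of fun _ _ => (1:ℝ)) ∧
       2 < (spectrum ℝ
         (Kᵀ * (Matrix.of fun i j => if grp i = j then (1:ℝ) else 0)
            * (Matrix.of fun i j => if grp i = j then (1:ℝ) else 0)ᵀ * K)).ncard) ∧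
    -- (iii) the nonzero eigenvalues of G are those of Zᵀ(I − X(XᵀX)⁻¹Xᵀ)Z
    (∀ (n a : ℕ) (grp : Fin n → Fin a)
       (K : Matrix (Fin n) (Fin (n - 1)) ℝ)
       (_ : Kᵀ * K = 1)
       (_ : K * Kᵀ = 1 - ((n : ℝ))⁻¹ • (Matrix.of fun _ _ => (1:ℝ))),
       ∀ X : Matrix (Fin n) (Fin 1) ℝ, X = Matrix.of (fun _ _ => (1:ℝ)) →
       spectrum ℝ
           (Kᵀ * (Matrix.of fun i j => if grp i = j then (1:ℝ) else 0)
              * (Matrix.of fun i j => if grp i = j then (1:ℝ) else 0)ᵀ * K) \ {0}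
         = spectrum ℝ
             ((Matrix.of fun i j => if grp i = j then (1:ℝ) else 0)ᵀ
                * (1 - X * (Xᵀ * X)⁻¹ * Xᵀ)
                * (Matrix.of fun i j => if grp i = j then (1:ℝ) else 0)) \ {0}) := by
  refine ⟨?_, exists_one_way_design_with_three_eigenvalues, ?_⟩
  · intro n a ha grp m hm hc K hK1 hK2
    have hn : n = a * m := by simpa using card_eq_card_mul_of_balanced hc
    have hr : a < n - 1 := by
      have : a * 2 ≤ a * m := Nat.mul_le_mul_left a hm
      omega
    have hspec := spectrum_eq_pair_of_balanced hc hK1 (by simpa using hK2) (by omega)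
      (by simp; omega) (by simpa using hr)
    unfold groupIndicator at hspec
    rw [hspec, Set.ncard_pair (by positivity)]
  · intro n a grp K _ hK2 X hX
    exact spectrum_gram_diff_zero_eq_residual grp (by simpa using hK2) X hX
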